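/- Let T ∈ M_n(ℤ) be expanding with all of its complex eigenvalues of equal modulus, and let F = F(T,A) be an integral self-affine set containing at least two points. Fix an integer m ≥ 2 and a real c₀ > 0. Then there exist natural numbers α_1, α_2 such that for all integers l, r ≥ 1 and every closed axis-parallel cube C ⊆ ℝ^n of side length c₀·m^{-r}: if c₀·m^{-r} < diam(T^{-l}F) ≤ c₀·m^{-r+1} (commensurability), then the number of vectors a ∈ ℤ^n with T^{-l}(F + a) ∩ C ≠ ∅ is at most α_1·l^{α_2}. Moreover, if T is diagonalizable over ℂ, one can take α_2 = 0, i.e. a bound independent of l and r. -/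

import Mathlib

open Filter MeasureTheory Metric Set Matrix
open scoped Topology ENNReal NNReal

noncomputable section

namespace FracPert

/-- View a plain vector as a point of Euclidean space. -/
def euc {n : ℕ} (v : Fin n → ℝ) : EuclideanSpace ℝ (Fin n) := WithLp.toLp 2 v

/-- The real matrix associated with an integer matrix. -/
def intMat {n : ℕ} (T : Matrix (Fin n) (Fin n) ℤ) : Matrix (Fin n) (Fin n) ℝ :=
  T.map fun x => (x : ℝ)

/-- An integer vector as a real vector. -/
def zVec {n : ℕ} (v : Fin n → ℤ) : Fin n → ℝ := fun i => (v i : ℝ)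

/-- An integer matrix is expanding if all of its complex eigenvalues have modulus `> 1`. -/
def IsExpandingZ {n : ℕ} (T : Matrix (Fin n) (Fin n) ℤ) : Prop :=
  ∀ μ : ℂ, (T.map fun x => (x : ℂ)).charpoly.IsRoot μ → 1 < ‖μ‖

/-- A real matrix is expanding if all of its complex eigenvalues have modulus `> 1`. -/
def IsExpandingR {n : ℕ} (T : Matrix (Fin n) (Fin n) ℝ) : Prop :=
  ∀ μ : ℂ, (T.map fun x => (x : ℂ)).charpoly.IsRoot μ → 1 < ‖μ‖

/-- `F` is the self-affine set generated by the real matrix `M` and the digit set `A`: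
`F` is nonempty, compact, and `F = ⋃_{a ∈ A} M⁻¹ (F + a)`. -/
def IsSelfAffineR {n : ℕ} (M : Matrix (Fin n) (Fin n) ℝ) (A : Set (Fin n → ℝ))
    (F : Set (EuclideanSpace ℝ (Fin n))) : Prop :=
  F.Nonempty ∧ IsCompact F ∧
    F = ⋃ a ∈ A, (fun x : EuclideanSpace ℝ (Fin n) => euc (M⁻¹ *ᵥ (x + euc a))) '' F

/-- Integral self-affine set. -/
def IsSelfAffineZ {n : ℕ} (T : Matrix (Fin n) (Fin n) ℤ) (A : Set (Fin n → ℤ))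
    (F : Set (EuclideanSpace ℝ (Fin n))) : Prop :=
  IsSelfAffineR (intMat T) (zVec '' A) F

/-- The iterated digit sets `A_k = {∑_{i=1}^k T^{k-i} a_i : a_i ∈ A}`. -/
def digitSetIter {n : ℕ} (T : Matrix (Fin n) (Fin n) ℤ) (A : Set (Fin n → ℤ)) (k : ℕ) :
    Set (Fin n → ℤ) :=
  { v | ∃ a : Fin k → Fin n → ℤ, (∀ i, a i ∈ A) ∧
      v = ∑ i : Fin k, (T ^ (k - 1 - (i : ℕ))) *ᵥ a i }

/-- The iterated digit sets for a real matrix. -/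
def digitSetIterR {n : ℕ} (J : Matrix (Fin n) (Fin n) ℝ) (A : Set (Fin n → ℝ)) (k : ℕ) :
    Set (Fin n → ℝ) :=
  { v | ∃ a : Fin k → Fin n → ℝ, (∀ i, a i ∈ A) ∧
      v = ∑ i : Fin k, (J ^ (k - 1 - (i : ℕ))) *ᵥ a i }

/-- The signed floor. -/
def sfloor (t : ℝ) : ℤ := if 0 ≤ t then ⌊t⌋ else -⌊|t|⌋

/-- The signed ceiling. -/
def sceil (t : ℝ) : ℤ := if 0 ≤ t then ⌈t⌉ else -⌈|t|⌉

/-- Entrywise signed floor of a vector. -/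
def sfloorVec {n : ℕ} (v : Fin n → ℝ) : Fin n → ℤ := fun i => sfloor (v i)

/-- The perturbed matrix `T_k`: the entrywise signed ceiling of `J^k`. -/
def pertMat {n : ℕ} (J : Matrix (Fin n) (Fin n) ℝ) (k : ℕ) : Matrix (Fin n) (Fin n) ℤ :=
  Matrix.of fun i j => sceil ((J ^ k) i j)

/-- A real Jordan block for a real eigenvalue: lower triangular, `lam` on the diagonal,
`1` on the subdiagonal. -/
def realJordanBlock (d : ℕ) (lam : ℝ) : Matrix (Fin d) (Fin d) ℝ :=
  Matrix.of fun i j =>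
    if (i : ℕ) = (j : ℕ) then lam else if (i : ℕ) = (j : ℕ) + 1 then 1 else 0

/-- A real Jordan block for a non-real eigenvalue `a + b i`, made of `2 × 2` blocks:
`C = [[a, -b], [b, a]]` on the block diagonal and `I₂` on the block subdiagonal. -/
def complexJordanBlock (m : ℕ) (a b : ℝ) : Matrix (Fin (2 * m)) (Fin (2 * m)) ℝ :=
  Matrix.of fun i j =>
    if (i : ℕ) / 2 = (j : ℕ) / 2 then
      (if (i : ℕ) % 2 = (j : ℕ) % 2 then a else if (i : ℕ) % 2 = 0 then -b else b)
    else if (i : ℕ) / 2 = (j : ℕ) / 2 + 1 then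
      (if (i : ℕ) % 2 = (j : ℕ) % 2 then 1 else 0)
    else 0

/-- `B` is a real Jordan-type block with eigenvalue modulus `ρ` and algebraic multiplicity
`np`. -/
def IsJordanBlock {d : ℕ} (B : Matrix (Fin d) (Fin d) ℝ) (ρ : ℝ) (np : ℕ) : Prop :=
  (d = np ∧ ∃ lam : ℝ, |lam| = ρ ∧ B = realJordanBlock d lam) ∨
  (∃ h : d = 2 * np, ∃ a b : ℝ, b ≠ 0 ∧ Real.sqrt (a ^ 2 + b ^ 2) = ρ ∧
      B = Matrix.reindex (finCongr h).symm (finCongr h).symm (complexJordanBlock np a b))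

/-- The index identification `(Σ p, Fin (d p)) ≃ Fin n` respects the block order
(lexicographic order on the sigma type). -/
def IsJordanArrangement {n s : ℕ} (d : Fin s → ℕ)
    (e : ((p : Fin s) × Fin (d p)) ≃ Fin n) : Prop :=
  ∀ x y : (p : Fin s) × Fin (d p), Sigma.Lex (· < ·) (fun _ => (· < ·)) x y → e x < e y

/-- `J` is a real Jordan-type matrix: a block diagonal matrix with real Jordan-type
blocks whose eigenvalue moduli are `ρ 0 < ρ 1 < ⋯`, all `> 1`. -/
def IsRealJordanLike {n s : ℕ} (J : Matrix (Fin n) (Fin n) ℝ) (ρ : Fin s → ℝ) : Prop :=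
  (∀ p, 1 < ρ p) ∧ StrictMono ρ ∧
  ∃ (d np : Fin s → ℕ) (B : ∀ p, Matrix (Fin (d p)) (Fin (d p)) ℝ)
    (e : ((p : Fin s) × Fin (d p)) ≃ Fin n),
    (∀ p, 0 < np p) ∧ (∀ p, IsJordanBlock (B p) (ρ p) (np p)) ∧
    IsJordanArrangement d e ∧
    J = Matrix.reindex e e (Matrix.blockDiagonal' B)

/-- Perturbation data for an integer matrix `T`: an invertible real matrix `P` such that
`J = P⁻¹ T P` is a real Jordan-type matrix and distinct points of the lattice `P⁻¹ ℤ^n`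
are at distance `> n`. -/
def IsPerturbationData {n s : ℕ} (T : Matrix (Fin n) (Fin n) ℤ)
    (P : Matrix (Fin n) (Fin n) ℝ) (ρ : Fin s → ℝ) : Prop :=
  IsUnit P ∧ IsRealJordanLike (P⁻¹ * intMat T * P) ρ ∧
    ∀ v w : Fin n → ℤ, v ≠ w →
      (n : ℝ) < ‖euc (P⁻¹ *ᵥ zVec v - P⁻¹ *ᵥ zVec w)‖

/-- The digit sets `Ã_k = P⁻¹ A_k`. -/
def tildeDigits {n : ℕ} (T : Matrix (Fin n) (Fin n) ℤ) (A : Set (Fin n → ℤ))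
    (P : Matrix (Fin n) (Fin n) ℝ) (k : ℕ) : Set (Fin n → ℝ) :=
  (fun a => P⁻¹ *ᵥ zVec a) '' digitSetIter T A k

/-- The perturbed digit sets `D_k = ⌊Ã_k⌋±`. -/
def pertDigits {n : ℕ} (T : Matrix (Fin n) (Fin n) ℤ) (A : Set (Fin n → ℤ))
    (P : Matrix (Fin n) (Fin n) ℝ) (k : ℕ) : Set (Fin n → ℤ) :=
  sfloorVec '' tildeDigits T A P k

/-- `N(S, δ)`: the smallest number of sets of diameter at most `δ` needed to cover `S`. -/
def coverNum {n : ℕ} (S : Set (EuclideanSpace ℝ (Fin n))) (δ : ℝ) : ℕ :=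
  sInf { m : ℕ | ∃ C : Fin m → Set (EuclideanSpace ℝ (Fin n)),
    (∀ i, Metric.diam (C i) ≤ δ) ∧ S ⊆ ⋃ i, C i }

/-- The lower box dimension. -/
def lowerBoxDim {n : ℕ} (S : Set (EuclideanSpace ℝ (Fin n))) : ℝ :=
  liminf (fun δ : ℝ => Real.log (coverNum S δ) / Real.log (1 / δ)) (𝓝[>] (0 : ℝ))

/-- The upper box dimension. -/
def upperBoxDim {n : ℕ} (S : Set (EuclideanSpace ℝ (Fin n))) : ℝ :=
  limsup (fun δ : ℝ => Real.log (coverNum S δ) / Real.log (1 / δ)) (𝓝[>] (0 : ℝ))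

/-- The integer lattice `ℤ^n` inside Euclidean space. -/
def intLattice (n : ℕ) : AddSubgroup (EuclideanSpace ℝ (Fin n)) where
  carrier := { v | ∀ i, ∃ m : ℤ, v i = (m : ℝ) }
  zero_mem' := fun i => ⟨0, by simp⟩
  add_mem' := by
    intro a b ha hb i
    obtain ⟨ma, hma⟩ := ha i
    obtain ⟨mb, hmb⟩ := hb i
    exact ⟨ma + mb, by push_cast; rw [← hma, ← hmb]; rfl⟩
  neg_mem' := by
    intro a ha i
    obtain ⟨ma, hma⟩ := ha i
    exact ⟨-ma, by push_cast; rw [← hma]; rfl⟩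

theorem intLattice_isClosed (n : ℕ) :
    IsClosed ((intLattice n : Set (EuclideanSpace ℝ (Fin n)))) := by
  have h : (intLattice n : Set (EuclideanSpace ℝ (Fin n))) =
      ⋂ i, (fun v : EuclideanSpace ℝ (Fin n) => v i) ⁻¹'
        (Set.range (fun m : ℤ => (m : ℝ))) := by
    ext v
    simp only [Set.mem_iInter, Set.mem_preimage, Set.mem_range]
    constructor
    · intro hv i; obtain ⟨m, hm⟩ := hv i; exact ⟨m, hm.symm⟩
    · intro hv i; obtain ⟨m, hm⟩ := hv i; exact ⟨m, hm.symm⟩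
  rw [h]
  exact isClosed_iInter fun i =>
    (Int.isClosedEmbedding_coe_real.isClosed_range).preimage
      (EuclideanSpace.proj (𝕜 := ℝ) i).continuous

/-- The `n`-torus `ℝ^n / ℤ^n` (with the quotient metric). -/
abbrev Torus (n : ℕ) := EuclideanSpace ℝ (Fin n) ⧸ intLattice n

noncomputable instance (n : ℕ) : NormedAddCommGroup (Torus n) :=
  have : IsClosed ((intLattice n : Set (EuclideanSpace ℝ (Fin n)))) := intLattice_isClosed n
  QuotientAddGroup.instNormedAddCommGroup (intLattice n)

instance (n : ℕ) : MeasurableSpace (Torus n) := borel _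
instance (n : ℕ) : BorelSpace (Torus n) := ⟨rfl⟩

/-- The quotient map `ℝ^n → 𝕋^n`. -/
def tproj (n : ℕ) : EuclideanSpace ℝ (Fin n) → Torus n := QuotientAddGroup.mk

/-- Multiplication by a matrix as an additive homomorphism of Euclidean space. -/
def mulVecAddHom {n : ℕ} (M : Matrix (Fin n) (Fin n) ℝ) :
    EuclideanSpace ℝ (Fin n) →+ EuclideanSpace ℝ (Fin n) where
  toFun v := euc (M *ᵥ v)
  map_zero' := by
    show euc (M *ᵥ (0 : Fin n → ℝ)) = 0
    simp [euc]
  map_add' x y := by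
    show euc (M *ᵥ ((x : Fin n → ℝ) + (y : Fin n → ℝ))) = _
    rw [Matrix.mulVec_add]
    rfl

theorem intLattice_le_comap {n : ℕ} (T : Matrix (Fin n) (Fin n) ℤ) :
    intLattice n ≤ (intLattice n).comap (mulVecAddHom (intMat T)) := by
  intro v hv
  intro i
  choose m hm using hv
  refine ⟨∑ j, T i j * m j, ?_⟩
  show (intMat T *ᵥ (v : Fin n → ℝ)) i = _
  simp only [intMat, Matrix.mulVec, dotProduct, Matrix.map_apply]
  push_cast
  refine Finset.sum_congr rfl fun j _ => ?_
  rw [hm j]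

/-- The toral endomorphism induced by an integer matrix `T`, determined by
`φ_T (π x) = π (T x)`. -/
def torusMap {n : ℕ} (T : Matrix (Fin n) (Fin n) ℤ) : Torus n → Torus n :=
  QuotientAddGroup.map (intLattice n) (intLattice n) (mulVecAddHom (intMat T))
    (intLattice_le_comap T)

/-- `μ` is invariant under `f`. -/
def MeasInvariant {α : Type*} [MeasurableSpace α] (f : α → α) (μ : Measure α) : Prop :=
  ∀ B : Set α, MeasurableSet B → μ (f ⁻¹' B) = μ B

/-- `μ` is an ergodic invariant measure for `f`. -/
def MeasErgodic {α : Type*} [MeasurableSpace α] (f : α → α) (μ : Measure α) : Prop :=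
  MeasInvariant f μ ∧ ∀ B : Set α, MeasurableSet B → f ⁻¹' B = B → μ B = 0 ∨ μ B = 1

/-- The (Euclidean) operator norm of a real matrix. -/
def opNorm {n : ℕ} (M : Matrix (Fin n) (Fin n) ℝ) : ℝ :=
  sSup { t : ℝ | ∃ v : EuclideanSpace ℝ (Fin n), ‖v‖ ≤ 1 ∧ t = ‖euc (M *ᵥ v)‖ }

/-- The smallest modulus of a complex eigenvalue of an integer matrix. -/
def minMod {n : ℕ} (M : Matrix (Fin n) (Fin n) ℤ) : ℝ :=
  sInf { r : ℝ | ∃ μ : ℂ, (M.map fun x => (x : ℂ)).charpoly.IsRoot μ ∧ r = ‖μ‖ }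

/-- The largest modulus of a complex eigenvalue of an integer matrix. -/
def maxMod {n : ℕ} (M : Matrix (Fin n) (Fin n) ℤ) : ℝ :=
  sSup { r : ℝ | ∃ μ : ℂ, (M.map fun x => (x : ℂ)).charpoly.IsRoot μ ∧ r = ‖μ‖ }

/-- The cylinder set `T^{-l}(F + a)`. -/
def cylinder {n : ℕ} (T : Matrix (Fin n) (Fin n) ℤ) (l : ℕ) (a : Fin n → ℤ)
    (F : Set (EuclideanSpace ℝ (Fin n))) : Set (EuclideanSpace ℝ (Fin n)) :=
  (fun x : EuclideanSpace ℝ (Fin n) => euc ((intMat T ^ l)⁻¹ *ᵥ (x + euc (zVec a)))) '' F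

/-- The set `T^{-l} F`. -/
def invIter {n : ℕ} (T : Matrix (Fin n) (Fin n) ℤ) (l : ℕ)
    (F : Set (EuclideanSpace ℝ (Fin n))) : Set (EuclideanSpace ℝ (Fin n)) :=
  (fun x : EuclideanSpace ℝ (Fin n) => euc ((intMat T ^ l)⁻¹ *ᵥ x)) '' F

/-- The closed axis-parallel cube with corner `x₀` and side length `σ`. -/
def cubeSet {n : ℕ} (x₀ : Fin n → ℝ) (σ : ℝ) : Set (EuclideanSpace ℝ (Fin n)) :=
  { y | ∀ i, x₀ i ≤ y i ∧ y i ≤ x₀ i + σ }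

/-- The counting bound of STATEMENT 10, with constants `α₁, α₂`. -/
def PieceCountBound {n : ℕ} (T : Matrix (Fin n) (Fin n) ℤ)
    (F : Set (EuclideanSpace ℝ (Fin n))) (m : ℕ) (c₀ : ℝ) (α₁ α₂ : ℕ) : Prop :=
  ∀ l r : ℕ, 1 ≤ l → 1 ≤ r → ∀ x₀ : Fin n → ℝ,
    c₀ * (m : ℝ) ^ (-(r : ℤ)) < Metric.diam (invIter T l F) →
    Metric.diam (invIter T l F) ≤ c₀ * (m : ℝ) ^ (1 - (r : ℤ)) →
    { a : Fin n → ℤ |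
        (cylinder T l a F ∩ cubeSet x₀ (c₀ * (m : ℝ) ^ (-(r : ℤ)))).Nonempty }.Finite ∧
    { a : Fin n → ℤ |
        (cylinder T l a F ∩ cubeSet x₀ (c₀ * (m : ℝ) ^ (-(r : ℤ)))).Nonempty }.ncard ≤
      α₁ * l ^ α₂

/-!
Write `B = T ^ l` and let `ρ` be the common modulus of the eigenvalues of `T`. If `B⁻¹ (F + a)`
meets the cube of side `σ`, then `a = B y - x` with `y` in the cube and `x ∈ F`, so two such
digits `a` differ by at most `‖B‖ σ + diam F`, while commensurability gives
`σ < diam (B⁻¹ F) ≤ ‖B⁻¹‖ diam F`. Hence the admissible `a` lie in a box of side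
`O(‖B‖ ‖B⁻¹‖ diam F)`. The eigenvalues of `ρ⁻¹ T` and of `ρ T⁻¹` lie on the unit circle, so their
powers grow at most like `l ^ (n - 1)`: expand `M ^ l` in the products
`(M - μ 0) ⋯ (M - μ (k - 1))` over the eigenvalues, which vanish at `k = n` by Cayley–Hamilton.
When `T` is diagonalizable these powers stay bounded.
-/

section Spectrum

variable {A : Type*} [Ring A] [Algebra ℂ A]

theorem norm_le_of_mem_spectrum_smul {a : A} {ρ : ℝ} (ha : ∀ μ ∈ spectrum ℂ a, ‖μ‖ ≤ ρ)
    {c : ℂ} (hc : c ≠ 0) : ∀ μ ∈ spectrum ℂ (c • a), ‖μ‖ ≤ ‖c‖ * ρ := by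
  rintro _ hμ
  rw [← Units.val_mk0 hc, ← Units.smul_def, spectrum.unit_smul_eq_smul] at hμ
  obtain ⟨μ, hμ, rfl⟩ := hμ
  show ‖c * μ‖ ≤ _
  rw [norm_mul]
  gcongr
  exact ha μ hμ

theorem norm_le_inv_of_mem_spectrum_inv {u : Aˣ} {ρ : ℝ} (hρ : 0 < ρ)
    (hu : ∀ μ ∈ spectrum ℂ (u : A), ρ ≤ ‖μ‖) : ∀ μ ∈ spectrum ℂ (↑u⁻¹ : A), ‖μ‖ ≤ ρ⁻¹ := by
  intro μ hμ
  have h := hu μ⁻¹ (spectrum.inv₀_mem_iff.mpr hμ)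
  rw [norm_inv] at h
  exact (le_inv_comm₀ hρ (inv_pos.mp (hρ.trans_le h))).mp h

end Spectrum

theorem le_sum_sum_of_nonneg {ι κ : Type*} [Fintype ι] [Fintype κ] {f : ι → κ → ℝ}
    (hf : 0 ≤ f) (i : ι) (j : κ) : f i j ≤ ∑ i, ∑ j, f i j :=
  (Finset.single_le_sum (fun j _ => hf i j) (Finset.mem_univ j)).trans
    (Finset.single_le_sum (f := fun i => ∑ j, f i j)
      (fun i _ => Finset.sum_nonneg fun j _ => hf i j) (Finset.mem_univ i))

section PowerGrowth

variable {ι : Type*} [Fintype ι] [DecidableEq ι]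

def PowGrowth (M : Matrix ι ι ℂ) (ρ : ℝ) (g : ℕ) : Prop :=
  ∃ C : ℝ, 0 ≤ C ∧ ∀ (l : ℕ) (i j : ι), ‖(M ^ l) i j‖ ≤ C * ((l : ℝ) + 1) ^ g * ρ ^ l

theorem PowGrowth.smul {M : Matrix ι ι ℂ} {ρ : ℝ} {g : ℕ} (h : PowGrowth M ρ g) (c : ℂ) :
    PowGrowth (c • M) (‖c‖ * ρ) g := by
  obtain ⟨C, hC, hM⟩ := h
  refine ⟨C, hC, fun l i j => ?_⟩
  rw [smul_pow, Matrix.smul_apply, smul_eq_mul, norm_mul, norm_pow, mul_pow]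
  calc ‖c‖ ^ l * ‖(M ^ l) i j‖ ≤ ‖c‖ ^ l * (C * ((l : ℝ) + 1) ^ g * ρ ^ l) := by
        gcongr; exact hM l i j
    _ = C * ((l : ℝ) + 1) ^ g * (‖c‖ ^ l * ρ ^ l) := by ring

/-- `powCoeff μ l k` is the complete homogeneous symmetric polynomial of degree `l - k` in
`μ 0, …, μ k`: the coefficient of `rootProd M μ k` in `M ^ l`. -/
def powCoeff (μ : ℕ → ℂ) : ℕ → ℕ → ℂ
  | 0, 0 => 1
  | 0, _ + 1 => 0
  | l + 1, 0 => μ 0 * powCoeff μ l 0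
  | l + 1, k + 1 => μ (k + 1) * powCoeff μ l (k + 1) + powCoeff μ l k

theorem norm_powCoeff_le {μ : ℕ → ℂ} (hμ : ∀ k, ‖μ k‖ ≤ 1) (l k : ℕ) :
    ‖powCoeff μ l k‖ ≤ ((l : ℝ) + 1) ^ k := by
  induction l generalizing k with
  | zero => cases k <;> simp [powCoeff]
  | succ l ih =>
    cases k with
    | zero =>
      rw [powCoeff, norm_mul, pow_zero]
      exact mul_le_one₀ (hμ 0) (norm_nonneg _) (by simpa using ih 0)
    | succ k =>
      calc ‖powCoeff μ (l + 1) (k + 1)‖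
          ≤ ‖μ (k + 1)‖ * ‖powCoeff μ l (k + 1)‖ + ‖powCoeff μ l k‖ := by
            rw [powCoeff, ← norm_mul]; exact norm_add_le _ _
        _ ≤ 1 * ((l : ℝ) + 1) ^ (k + 1) + ((l : ℝ) + 1) ^ k := by
            gcongr
            exacts [hμ _, ih _, ih _]
        _ = ((l : ℝ) + 1) ^ k * ((l : ℝ) + 2) := by ring
        _ ≤ ((l : ℝ) + 2) ^ k * ((l : ℝ) + 2) := by gcongr; linarith
        _ = (((l + 1 : ℕ) : ℝ) + 1) ^ (k + 1) := by push_cast; ring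

def rootProd (M : Matrix ι ι ℂ) (μ : ℕ → ℂ) : ℕ → Matrix ι ι ℂ
  | 0 => 1
  | k + 1 => rootProd M μ k * (M - μ k • 1)

theorem commute_rootProd (M : Matrix ι ι ℂ) (μ : ℕ → ℂ) (k : ℕ) :
    Commute M (rootProd M μ k) := by
  induction k with
  | zero => exact Commute.one_right M
  | succ k ih =>
    exact ih.mul_right ((Commute.refl M).sub_right ((Commute.one_right M).smul_right _))

theorem mul_rootProd (M : Matrix ι ι ℂ) (μ : ℕ → ℂ) (k : ℕ) :
    M * rootProd M μ k = rootProd M μ (k + 1) + μ k • rootProd M μ k := by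
  rw [rootProd, mul_sub, mul_smul_comm, mul_one, (commute_rootProd M μ k).eq]
  abel

theorem pow_eq_sum_powCoeff_smul_rootProd {M : Matrix ι ι ℂ} {μ : ℕ → ℂ} {N : ℕ}
    (hN : rootProd M μ N = 0) (l : ℕ) :
    M ^ l = ∑ k ∈ Finset.range N, powCoeff μ l k • rootProd M μ k := by
  induction l with
  | zero =>
    cases N with
    | zero => simpa [rootProd] using hN
    | succ N => simp [Finset.sum_range_succ', powCoeff, rootProd]
  | succ l ih =>
    rw [pow_succ', ih, Finset.mul_sum]
    simp_rw [mul_smul_comm, mul_rootProd, smul_add, smul_smul]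
    rw [Finset.sum_add_distrib]
    cases N with
    | zero => simp
    | succ N =>
      rw [Finset.sum_range_succ, hN, Finset.sum_range_succ' _ N, Finset.sum_range_succ' _ N]
      simp only [powCoeff, smul_zero, add_zero, add_smul, Finset.sum_add_distrib, mul_comm]
      abel

theorem rootProd_getD_eq_prod (M : Matrix ι ι ℂ) (L : List ℂ) {k : ℕ} (hk : k ≤ L.length) :
    rootProd M (fun k => L.getD k 0) k = ((L.take k).map fun a => M - a • 1).prod := by
  induction k with
  | zero => simp [rootProd]
  | succ k ih =>
    rw [rootProd, ih (by omega), List.take_add_one, List.map_append, List.prod_append,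
      List.getElem?_eq_getElem (by omega), List.getD_eq_getElem _ _ (by omega)]
    simp

theorem rootProd_charpoly_roots_eq_zero (M : Matrix ι ι ℂ) :
    rootProd M (fun k => M.charpoly.roots.toList.getD k 0) (Fintype.card ι) = 0 := by
  have hlen : M.charpoly.roots.toList.length = Fintype.card ι := by
    rw [Multiset.length_toList, IsAlgClosed.card_roots_eq_natDegree, charpoly_natDegree_eq_dim]
  have hprod : (M.charpoly.roots.toList.map fun a => Polynomial.X - Polynomial.C a).prod =
      M.charpoly := by
    rw [← Multiset.prod_coe, ← Multiset.map_coe, Multiset.coe_toList]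
    exact ((IsAlgClosed.splits _).eq_prod_roots_of_monic (charpoly_monic M)).symm
  have hfactor : (Polynomial.aeval M ∘ fun a : ℂ => Polynomial.X - Polynomial.C a) =
      fun a => M - a • 1 := by
    funext a; simp [Algebra.algebraMap_eq_smul_one]
  rw [rootProd_getD_eq_prod M _ hlen.ge, List.take_of_length_le hlen.le]
  conv_rhs => rw [← Matrix.aeval_self_charpoly M, ← hprod]
  rw [map_list_prod, List.map_map, hfactor]

theorem powGrowth_one_of_norm_le_one {M : Matrix ι ι ℂ} (hM : ∀ μ ∈ spectrum ℂ M, ‖μ‖ ≤ 1) :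
    PowGrowth M 1 (Fintype.card ι - 1) := by
  set μ : ℕ → ℂ := fun k => M.charpoly.roots.toList.getD k 0
  have hμ : ∀ k, ‖μ k‖ ≤ 1 := by
    intro k
    by_cases hk : k < M.charpoly.roots.toList.length
    · have hroot : μ k ∈ M.charpoly.roots := by
        rw [show μ k = _ from List.getD_eq_getElem _ _ hk]
        exact Multiset.mem_toList.mp (List.getElem_mem hk)
      exact hM _ (mem_spectrum_iff_isRoot_charpoly.mpr (Polynomial.isRoot_of_mem_roots hroot))
    · rw [show μ k = 0 from List.getD_eq_default _ _ (not_lt.mp hk), norm_zero]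
      exact zero_le_one
  set P := rootProd M μ
  refine ⟨∑ k ∈ Finset.range (Fintype.card ι), ∑ i, ∑ j, ‖P k i j‖, by positivity,
    fun l i j => ?_⟩
  rw [pow_eq_sum_powCoeff_smul_rootProd (rootProd_charpoly_roots_eq_zero M), Matrix.sum_apply,
    one_pow, mul_one, mul_comm, Finset.mul_sum]
  refine (norm_sum_le _ _).trans (Finset.sum_le_sum fun k hk => ?_)
  rw [Matrix.smul_apply, smul_eq_mul, norm_mul]
  gcongr
  · exact (norm_powCoeff_le hμ l k).trans
      (pow_le_pow_right₀ (by linarith [l.cast_nonneg (α := ℝ)]) (by simp at hk; omega))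
  · exact le_sum_sum_of_nonneg (f := fun i j => ‖P k i j‖) (fun _ _ => norm_nonneg _) i j

theorem powGrowth_of_norm_le {M : Matrix ι ι ℂ} {ρ : ℝ} (hρ : 0 < ρ)
    (hM : ∀ μ ∈ spectrum ℂ M, ‖μ‖ ≤ ρ) : PowGrowth M ρ (Fintype.card ι - 1) := by
  have hρ' : (ρ : ℂ) ≠ 0 := by exact_mod_cast hρ.ne'
  have hscaled : ∀ μ ∈ spectrum ℂ ((ρ : ℂ)⁻¹ • M), ‖μ‖ ≤ 1 := by
    intro μ hμ
    simpa [abs_of_pos hρ, hρ.ne'] using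
      norm_le_of_mem_spectrum_smul hM (inv_ne_zero hρ') μ hμ
  simpa [smul_smul, hρ', abs_of_pos hρ] using
    (powGrowth_one_of_norm_le_one hscaled).smul (ρ : ℂ)

theorem powGrowth_zero_of_conj_eq_diagonal {M Q : Matrix ι ι ℂ} {d : ι → ℂ} (hQ : IsUnit Q)
    (hd : Q⁻¹ * M * Q = diagonal d) {ρ : ℝ} (hρ : 0 ≤ ρ)
    (hM : ∀ μ ∈ spectrum ℂ M, ‖μ‖ ≤ ρ) : PowGrowth M ρ 0 := by
  have hu : ((hQ.unit⁻¹ : (Matrix ι ι ℂ)ˣ) : Matrix ι ι ℂ) = Q⁻¹ := by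
    rw [Matrix.coe_units_inv, hQ.unit_spec]
  have hdM : ∀ p, ‖d p‖ ≤ ρ := fun p => hM _ <| by
    rw [← spectrum.units_conjugate' (u := hQ.unit), hu, hQ.unit_spec, hd, spectrum_diagonal]
    exact ⟨p, rfl⟩
  have hdet := (Matrix.isUnit_iff_isUnit_det Q).mp hQ
  have hpow : ∀ l : ℕ, M ^ l = Q * diagonal (d ^ l) * Q⁻¹ := by
    intro l
    have h := Units.conj_pow' hQ.unit M l
    rw [hu, hQ.unit_spec, hd, diagonal_pow] at h
    rw [h, ← mul_assoc, ← mul_assoc, mul_nonsing_inv _ hdet, one_mul, mul_assoc,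
      mul_nonsing_inv _ hdet, mul_one]
  refine ⟨∑ i, ∑ j, ∑ p, ‖Q i p‖ * ‖Q⁻¹ p j‖, by positivity, fun l i j => ?_⟩
  rw [hpow, Matrix.mul_apply, pow_zero, mul_one]
  calc ‖∑ p, (Q * diagonal (d ^ l)) i p * Q⁻¹ p j‖
      ≤ ∑ p, ‖Q i p‖ * ‖Q⁻¹ p j‖ * ρ ^ l := by
        refine (norm_sum_le _ _).trans (Finset.sum_le_sum fun p _ => ?_)
        rw [Matrix.mul_diagonal, Pi.pow_apply, norm_mul, norm_mul, norm_pow]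
        calc _ = ‖Q i p‖ * ‖Q⁻¹ p j‖ * ‖d p‖ ^ l := by ring
          _ ≤ _ := by gcongr; exact hdM p
    _ = (∑ p, ‖Q i p‖ * ‖Q⁻¹ p j‖) * ρ ^ l := by rw [Finset.sum_mul]
    _ ≤ _ := mul_le_mul_of_nonneg_right
        (le_sum_sum_of_nonneg (f := fun i j => ∑ p, ‖Q i p‖ * ‖Q⁻¹ p j‖)
          (fun _ _ => by positivity) i j) (by positivity)

theorem inv_conj_eq_diagonal {M Q : Matrix ι ι ℂ} {d : ι → ℂ} (hQ : IsUnit Q)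
    (hd : Q⁻¹ * M * Q = diagonal d) : Q⁻¹ * M⁻¹ * Q = diagonal (Ring.inverse d) := by
  rw [← Matrix.inv_diagonal, ← hd, Matrix.mul_inv_rev, Matrix.mul_inv_rev,
    Matrix.nonsing_inv_nonsing_inv _ ((Matrix.isUnit_iff_isUnit_det _).mp hQ), Matrix.mul_assoc]

end PowerGrowth

section IntegerMatrix

variable {ι : Type*} [Fintype ι] [DecidableEq ι]

theorem exists_forall_norm_eq_of_mem_spectrum {M : Matrix ι ι ℂ}
    (hM : ∀ μ, M.charpoly.IsRoot μ → 0 < ‖μ‖)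
    (heq : ∀ μ ν, M.charpoly.IsRoot μ → M.charpoly.IsRoot ν → ‖μ‖ = ‖ν‖) :
    ∃ ρ : ℝ, 0 < ρ ∧ ∀ μ ∈ spectrum ℂ M, ‖μ‖ = ρ := by
  by_cases h : ∃ μ, M.charpoly.IsRoot μ
  · obtain ⟨μ₀, h₀⟩ := h
    exact ⟨‖μ₀‖, hM μ₀ h₀,
      fun μ hμ => heq μ μ₀ (mem_spectrum_iff_isRoot_charpoly.mp hμ) h₀⟩
  · exact ⟨1, one_pos, fun μ hμ => absurd ⟨μ, mem_spectrum_iff_isRoot_charpoly.mp hμ⟩ h⟩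

theorem map_nonsing_inv {K L : Type*} [Field K] [Field L] (f : K →+* L) (A : Matrix ι ι K) :
    A⁻¹.map f = (A.map f)⁻¹ := by
  have hadj := f.map_adjugate A
  have hdet := f.map_det A
  simp only [RingHom.mapMatrix_apply] at hadj hdet
  rw [Matrix.inv_def, Matrix.inv_def, ← hadj, ← hdet, Ring.inverse_eq_inv', Ring.inverse_eq_inv',
    ← map_inv₀]
  ext i j
  simp

variable {n : ℕ}

theorem intMat_map_ofReal (T : Matrix (Fin n) (Fin n) ℤ) :
    (intMat T).map Complex.ofRealHom = T.map fun x => (x : ℂ) := by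
  ext i j
  simp [intMat]

theorem abs_intMat_pow_apply (T : Matrix (Fin n) (Fin n) ℤ) (l : ℕ) (i j : Fin n) :
    |(intMat T ^ l) i j| = ‖((T.map fun x => (x : ℂ)) ^ l) i j‖ := by
  rw [← intMat_map_ofReal, ← RingHom.mapMatrix_apply, ← map_pow, RingHom.mapMatrix_apply,
    Matrix.map_apply, Complex.ofRealHom_eq_coe, Complex.norm_real, Real.norm_eq_abs]

theorem abs_intMat_pow_inv_apply (T : Matrix (Fin n) (Fin n) ℤ) (l : ℕ) (i j : Fin n) :
    |(intMat T ^ l)⁻¹ i j| = ‖((T.map fun x => (x : ℂ))⁻¹ ^ l) i j‖ := by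
  rw [← intMat_map_ofReal, ← map_nonsing_inv, ← RingHom.mapMatrix_apply, ← map_pow,
    RingHom.mapMatrix_apply, Matrix.map_apply, Complex.ofRealHom_eq_coe, Complex.norm_real,
    Real.norm_eq_abs, Matrix.inv_pow']

theorem isUnit_det_intMat_pow {T : Matrix (Fin n) (Fin n) ℤ}
    (hT : IsUnit (T.map fun x => (x : ℂ))) (l : ℕ) : IsUnit (intMat T ^ l).det := by
  rw [det_pow]
  refine (IsUnit.pow l ?_)
  rw [← intMat_map_ofReal, Matrix.isUnit_iff_isUnit_det, ← RingHom.mapMatrix_apply,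
    ← RingHom.map_det] at hT
  exact (isUnit_map_iff _ _).mp hT

end IntegerMatrix

section Counting

theorem finite_and_ncard_le_of_abs_sub_le {ι : Type*} [Fintype ι] [DecidableEq ι]
    {S : Set (ι → ℤ)} {D : ℕ} (hS : ∀ a ∈ S, ∀ b ∈ S, ∀ i, |a i - b i| ≤ D) :
    S.Finite ∧ S.ncard ≤ (2 * D + 1) ^ Fintype.card ι := by
  rcases S.eq_empty_or_nonempty with rfl | ⟨a₀, ha₀⟩
  · simp
  have hsub : S ⊆ Finset.Icc (fun i => a₀ i - D) (fun i => a₀ i + D) := fun a ha => by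
    have h := fun i => abs_le.mp (hS a ha a₀ ha₀ i)
    simp only [Finset.coe_Icc, Set.mem_Icc]
    exact ⟨fun i => by linarith [h i], fun i => by linarith [h i]⟩
  refine ⟨(Finset.finite_toSet _).subset hsub, ?_⟩
  calc S.ncard ≤ (Finset.Icc (fun i => a₀ i - D) (fun i => a₀ i + D)).card := by
        rw [← Set.ncard_coe_finset]; exact Set.ncard_le_ncard hsub (Finset.finite_toSet _)
    _ = (2 * D + 1) ^ Fintype.card ι := by
        have hcard : ∀ i, a₀ i + D + 1 - (a₀ i - D) = ((2 * D + 1 : ℕ) : ℤ) := fun i => by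
          push_cast; ring
        simp only [Pi.card_Icc, Int.card_Icc, hcard, Int.toNat_natCast, Finset.prod_const,
          Finset.card_univ]

theorem two_mul_mul_pow_add_one_pow_le (D k n : ℕ) {l : ℕ} (hl : 1 ≤ l) :
    (2 * D * (l + 1) ^ k + 1) ^ n ≤ ((2 * D + 1) * 2 ^ k) ^ n * l ^ (k * n) := by
  have h1 : 1 ≤ (l + 1) ^ k := Nat.one_le_pow _ _ (Nat.succ_pos l)
  have h2 : (l + 1) ^ k ≤ 2 ^ k * l ^ k := by
    rw [← mul_pow]; exact Nat.pow_le_pow_left (by omega) k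
  calc (2 * D * (l + 1) ^ k + 1) ^ n ≤ ((2 * D + 1) * 2 ^ k * l ^ k) ^ n := by
        gcongr
        nlinarith
    _ = ((2 * D + 1) * 2 ^ k) ^ n * l ^ (k * n) := by rw [pow_mul, ← mul_pow, mul_assoc]

end Counting

section Geometry

variable {n : ℕ}

theorem norm_euc_le_of_abs_le {v : Fin n → ℝ} {b : ℝ} (hb : 0 ≤ b) (hv : ∀ i, |v i| ≤ b) :
    ‖euc v‖ ≤ n * b := by
  have hsum : ∑ i, ‖(euc v) i‖ ^ 2 ≤ n * b ^ 2 := by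
    calc ∑ i, ‖(euc v) i‖ ^ 2 ≤ ∑ _i : Fin n, b ^ 2 :=
          Finset.sum_le_sum fun i _ => by
            simpa [euc] using pow_le_pow_left₀ (abs_nonneg _) (hv i) 2
      _ = n * b ^ 2 := by simp
  calc ‖euc v‖ ≤ √(n * b ^ 2) := by rw [EuclideanSpace.norm_eq]; exact Real.sqrt_le_sqrt hsum
    _ = √n * b := by rw [Real.sqrt_mul (Nat.cast_nonneg n), Real.sqrt_sq hb]
    _ ≤ n * b := by
        gcongr
        calc √(n : ℝ) ≤ √((n : ℝ) ^ 2) := Real.sqrt_le_sqrt (by norm_cast; nlinarith)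
          _ = n := Real.sqrt_sq (Nat.cast_nonneg n)

theorem abs_mulVec_apply_le {M : Matrix (Fin n) (Fin n) ℝ} {v : Fin n → ℝ} {E c : ℝ}
    (hM : ∀ i j, |M i j| ≤ E) (hv : ∀ j, |v j| ≤ c) (i : Fin n) :
    |(M *ᵥ v) i| ≤ n * (E * c) := by
  calc |(M *ᵥ v) i| = |∑ j, M i j * v j| := rfl
    _ ≤ ∑ j, |M i j * v j| := Finset.abs_sum_le_sum_abs _ _
    _ ≤ ∑ _j : Fin n, E * c := Finset.sum_le_sum fun j _ => by
        rw [abs_mul]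
        exact mul_le_mul (hM i j) (hv j) (abs_nonneg _) ((abs_nonneg _).trans (hM i j))
    _ = n * (E * c) := by simp

theorem norm_euc_mulVec_le {M : Matrix (Fin n) (Fin n) ℝ} {G : ℝ} (hG : 0 ≤ G)
    (hM : ∀ i j, |M i j| ≤ G) (x : EuclideanSpace ℝ (Fin n)) :
    ‖euc (M *ᵥ x)‖ ≤ n ^ 2 * G * ‖x‖ := by
  have hx : ∀ j, |x j| ≤ ‖x‖ := fun j => by simpa using PiLp.norm_apply_le x j
  calc ‖euc (M *ᵥ x)‖ ≤ n * (n * (G * ‖x‖)) :=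
        norm_euc_le_of_abs_le (by positivity) (abs_mulVec_apply_le hM hx)
    _ = n ^ 2 * G * ‖x‖ := by ring

theorem diam_image_mulVec_le {M : Matrix (Fin n) (Fin n) ℝ} {G : ℝ} (hG : 0 ≤ G)
    (hM : ∀ i j, |M i j| ≤ G) {S : Set (EuclideanSpace ℝ (Fin n))} (hS : Bornology.IsBounded S) :
    diam ((fun x : EuclideanSpace ℝ (Fin n) => euc (M *ᵥ x)) '' S) ≤ n ^ 2 * G * diam S := by
  refine diam_le_of_forall_dist_le (by positivity) ?_
  rintro _ ⟨x, hx, rfl⟩ _ ⟨y, hy, rfl⟩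
  have hsub : euc (M *ᵥ x) - euc (M *ᵥ y) = euc (M *ᵥ (x - y)) := by
    simp [euc, Matrix.mulVec_sub]
  rw [dist_eq_norm, hsub]
  calc ‖euc (M *ᵥ (x - y))‖ ≤ n ^ 2 * G * ‖x - y‖ := norm_euc_mulVec_le hG hM _
    _ ≤ n ^ 2 * G * diam S := by
        gcongr
        rw [← dist_eq_norm]
        exact dist_le_diam_of_mem hS hx hy

theorem abs_sub_le_of_mem_cubeSet {x₀ : Fin n → ℝ} {σ : ℝ} {y y' : EuclideanSpace ℝ (Fin n)}
    (hy : y ∈ cubeSet x₀ σ) (hy' : y' ∈ cubeSet x₀ σ) (i : Fin n) : |y i - y' i| ≤ σ :=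
  abs_sub_le_iff.mpr ⟨by linarith [hy i, hy' i], by linarith [hy i, hy' i]⟩

theorem exists_eq_mulVec_sub_of_mem_cylinder {T : Matrix (Fin n) (Fin n) ℤ} {l : ℕ}
    (hT : IsUnit (intMat T ^ l).det) {a : Fin n → ℤ} {F : Set (EuclideanSpace ℝ (Fin n))}
    {y : EuclideanSpace ℝ (Fin n)} (hy : y ∈ cylinder T l a F) :
    ∃ x ∈ F, zVec a = (intMat T ^ l) *ᵥ y - x := by
  obtain ⟨x, hx, rfl⟩ := hy
  refine ⟨x, hx, ?_⟩
  simp [euc, Matrix.mulVec_mulVec, Matrix.mul_nonsing_inv _ hT]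

end Geometry

section PieceCount

variable {n : ℕ}

theorem abs_sub_le_of_cylinder_inter_cubeSet_nonempty {T : Matrix (Fin n) (Fin n) ℤ} {l : ℕ}
    (hT : IsUnit (intMat T ^ l).det) {F : Set (EuclideanSpace ℝ (Fin n))}
    (hF : Bornology.IsBounded F) {E G : ℝ} (hE0 : 0 ≤ E) (hE : ∀ i j, |(intMat T ^ l) i j| ≤ E)
    (hG0 : 0 ≤ G) (hG : ∀ i j, |(intMat T ^ l)⁻¹ i j| ≤ G) {x₀ : Fin n → ℝ} {σ : ℝ}
    (hσ : σ < diam (invIter T l F)) {a a' : Fin n → ℤ}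
    (ha : (cylinder T l a F ∩ cubeSet x₀ σ).Nonempty)
    (ha' : (cylinder T l a' F ∩ cubeSet x₀ σ).Nonempty) (i : Fin n) :
    |(a i : ℝ) - a' i| ≤ (n ^ 3 * (E * G) + 1) * diam F := by
  obtain ⟨y, hy, hyC⟩ := ha
  obtain ⟨y', hy', hyC'⟩ := ha'
  obtain ⟨x, hx, hax⟩ := exists_eq_mulVec_sub_of_mem_cylinder hT hy
  obtain ⟨x', hx', hax'⟩ := exists_eq_mulVec_sub_of_mem_cylinder hT hy'
  have hσle : σ ≤ n ^ 2 * G * diam F := hσ.le.trans (diam_image_mulVec_le hG0 hG hF)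
  have hBy : |((intMat T ^ l) *ᵥ (y - y')) i| ≤ n * (E * σ) :=
    abs_mulVec_apply_le hE (abs_sub_le_of_mem_cubeSet hyC hyC') i
  have hxx : |x' i - x i| ≤ diam F := by
    have h := (PiLp.norm_apply_le (x' - x) i).trans
      ((dist_eq_norm x' x).symm.le.trans (dist_le_diam_of_mem hF hx' hx))
    simpa only [WithLp.ofLp_sub, Pi.sub_apply, Real.norm_eq_abs] using h
  have hdiff : (a i : ℝ) - a' i = ((intMat T ^ l) *ᵥ (y - y')) i + (x' i - x i) := by
    have h := congrFun hax i
    have h' := congrFun hax' i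
    simp only [zVec, Pi.sub_apply] at h h'
    simp only [Matrix.mulVec_sub, Pi.sub_apply]
    linarith
  calc |(a i : ℝ) - a' i| ≤ n * (E * σ) + diam F := by
        rw [hdiff]; exact (abs_add_le _ _).trans (add_le_add hBy hxx)
    _ ≤ n * (E * (n ^ 2 * G * diam F)) + diam F := by gcongr
    _ = (n ^ 3 * (E * G) + 1) * diam F := by ring

theorem pieceCountBound_of_powGrowth {T : Matrix (Fin n) (Fin n) ℤ}
    {F : Set (EuclideanSpace ℝ (Fin n))} (hF : Bornology.IsBounded F)
    (hT : IsUnit (T.map fun x => (x : ℂ))) {ρ : ℝ} (hρ : 0 < ρ) {g : ℕ}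
    (hpow : PowGrowth (T.map fun x => (x : ℂ)) ρ g)
    (hinv : PowGrowth (T.map fun x => (x : ℂ))⁻¹ ρ⁻¹ g) (m : ℕ) (c₀ : ℝ) :
    ∃ α₁, PieceCountBound T F m c₀ α₁ (2 * g * n) := by
  obtain ⟨C₁, hC₁, hpow⟩ := hpow
  obtain ⟨C₂, hC₂, hinv⟩ := hinv
  set D := ⌈(n ^ 3 * (C₁ * C₂) + 1) * diam F⌉₊
  refine ⟨((2 * D + 1) * 2 ^ (2 * g)) ^ n, fun l r hl _ x₀ hσ _ => ?_⟩
  refine (finite_and_ncard_le_of_abs_sub_le (D := D * (l + 1) ^ (2 * g))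
    fun a ha a' ha' i => ?_).imp_right fun hcard => hcard.trans ?_
  · set E := C₁ * ((l : ℝ) + 1) ^ g * ρ ^ l
    set G := C₂ * ((l : ℝ) + 1) ^ g * ρ⁻¹ ^ l
    have hEG : E * G = C₁ * C₂ * ((l : ℝ) + 1) ^ (2 * g) := by
      simp only [E, G, inv_pow]
      field_simp
      ring
    have h := abs_sub_le_of_cylinder_inter_cubeSet_nonempty (isUnit_det_intMat_pow hT l) hF
      (by positivity) (fun i j => (abs_intMat_pow_apply T l i j).trans_le (hpow l i j))
      (by positivity) (fun i j => (abs_intMat_pow_inv_apply T l i j).trans_le (hinv l i j))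
      hσ ha ha' i
    have hl1 : (1 : ℝ) ≤ ((l : ℝ) + 1) ^ (2 * g) :=
      one_le_pow₀ (by linarith [l.cast_nonneg (α := ℝ)])
    suffices |(a i : ℝ) - a' i| ≤ D * ((l : ℝ) + 1) ^ (2 * g) by exact_mod_cast this
    calc |(a i : ℝ) - a' i| ≤ (n ^ 3 * (E * G) + 1) * diam F := h
      _ ≤ (n ^ 3 * (C₁ * C₂ * ((l : ℝ) + 1) ^ (2 * g)) + ((l : ℝ) + 1) ^ (2 * g)) * diam F := by
          rw [hEG]; gcongr
      _ = (n ^ 3 * (C₁ * C₂) + 1) * diam F * ((l : ℝ) + 1) ^ (2 * g) := by ring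
      _ ≤ D * ((l : ℝ) + 1) ^ (2 * g) := by gcongr; exact Nat.le_ceil _
  · simpa [mul_assoc] using two_mul_mul_pow_add_one_pow_le D (2 * g) n hl

end PieceCount

theorem count_commensurable_pieces_general {n : ℕ} (T : Matrix (Fin n) (Fin n) ℤ)
    (A : Finset (Fin n → ℤ)) (hT : IsExpandingZ T)
    (heq : ∀ μ ν : ℂ, (T.map fun x => (x : ℂ)).charpoly.IsRoot μ →
      (T.map fun x => (x : ℂ)).charpoly.IsRoot ν → ‖μ‖ = ‖ν‖)
    (F : Set (EuclideanSpace ℝ (Fin n))) (hF : IsSelfAffineZ T (↑A) F)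
    (m : ℕ) (c₀ : ℝ) :
    (∃ α₁ α₂ : ℕ, PieceCountBound T F m c₀ α₁ α₂) ∧
    ((∃ Q : Matrix (Fin n) (Fin n) ℂ, IsUnit Q ∧ ∃ dv : Fin n → ℂ,
        Q⁻¹ * (T.map fun x => (x : ℂ)) * Q = Matrix.diagonal dv) →
      ∃ α₁ : ℕ, PieceCountBound T F m c₀ α₁ 0) := by
  obtain ⟨ρ, hρ, hspec⟩ := exists_forall_norm_eq_of_mem_spectrum
    (fun μ hμ => one_pos.trans (hT μ hμ)) heq
  have hunit : IsUnit (T.map fun x => (x : ℂ)) :=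
    (spectrum.zero_notMem_iff ℂ).mp fun h0 => by simpa [hρ.ne] using hspec 0 h0
  have hinv : ∀ μ ∈ spectrum ℂ (T.map fun x => (x : ℂ))⁻¹, ‖μ‖ ≤ ρ⁻¹ := by
    rw [← hunit.unit_spec, ← Matrix.coe_units_inv]
    exact norm_le_inv_of_mem_spectrum_inv hρ fun μ hμ => (hspec μ hμ).ge
  have hbdd := hF.2.1.isBounded
  constructor
  · obtain ⟨α₁, h⟩ := pieceCountBound_of_powGrowth hbdd hunit hρ
      (powGrowth_of_norm_le hρ fun μ hμ => (hspec μ hμ).le)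
      (powGrowth_of_norm_le (inv_pos.mpr hρ) hinv) m c₀
    exact ⟨α₁, _, h⟩
  · rintro ⟨Q, hQ, d, hd⟩
    obtain ⟨α₁, h⟩ := pieceCountBound_of_powGrowth hbdd hunit hρ
      (powGrowth_zero_of_conj_eq_diagonal hQ hd hρ.le fun μ hμ => (hspec μ hμ).le)
      (powGrowth_zero_of_conj_eq_diagonal hQ (inv_conj_eq_diagonal hQ hd) (inv_pos.mpr hρ).le
        hinv) m c₀
    exact ⟨α₁, by simpa using h⟩

/-- bound on the number of commensurable cylinders meeting a mesh cube. -/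
theorem count_commensurable_pieces {n : ℕ} (T : Matrix (Fin n) (Fin n) ℤ)
    (A : Finset (Fin n → ℤ)) (hT : IsExpandingZ T)
    (heq : ∀ μ ν : ℂ, (T.map fun x => (x : ℂ)).charpoly.IsRoot μ →
      (T.map fun x => (x : ℂ)).charpoly.IsRoot ν → ‖μ‖ = ‖ν‖)
    (F : Set (EuclideanSpace ℝ (Fin n))) (hF : IsSelfAffineZ T (↑A) F)
    (hF2 : F.Nontrivial) (m : ℕ) (hm : 2 ≤ m) (c₀ : ℝ) (hc₀ : 0 < c₀) :
    (∃ α₁ α₂ : ℕ, PieceCountBound T F m c₀ α₁ α₂) ∧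
    ((∃ Q : Matrix (Fin n) (Fin n) ℂ, IsUnit Q ∧ ∃ dv : Fin n → ℂ,
        Q⁻¹ * (T.map fun x => (x : ℂ)) * Q = Matrix.diagonal dv) →
      ∃ α₁ : ℕ, PieceCountBound T F m c₀ α₁ 0) :=
  count_commensurable_pieces_general T A hT heq F hF m c₀

end FracPert
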